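/- Let f : 𝕊^n → ℝ be convex and β-smooth, let X* be a minimizer of f over S_n with rank(X*) = r (1 ≤ r < n), let μ_1 ≥ ... ≥ μ_n be the eigenvalues of ∇f(X*), and set δ = μ_{n−r} − μ_n. Let X ∈ S_n and let ∇̃ ∈ 𝕊^n satisfy ‖∇̃ − ∇f(X)‖ ≤ ξ (spectral norm). Then −Σ_{i=1}^{r+1} λ_{n−i+1}(∇̃) ≤ −((r+1)μ_n + δ) + (r+1)(ξ + β‖X − X*‖_F). -/

import Mathlib

open scoped BigOperators
open MeasureTheory
open scoped Matrix

namespace LRSGD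

noncomputable def frobInner {n : ℕ} (A B : Matrix (Fin n) (Fin n) ℝ) : ℝ :=
  Matrix.trace (A * Bᵀ)

noncomputable def frobNorm {n : ℕ} (A : Matrix (Fin n) (Fin n) ℝ) : ℝ :=
  Real.sqrt (∑ i, ∑ j, (A i j) ^ 2)

noncomputable def specNorm {n : ℕ} (A : Matrix (Fin n) (Fin n) ℝ) : ℝ :=
  sSup {s : ℝ | ∃ u : Fin n → ℝ, (∑ k, u k ^ 2) = 1 ∧
    s = Real.sqrt (∑ i, (A.mulVec u i) ^ 2)}

def spectrahedron (n : ℕ) : Set (Matrix (Fin n) (Fin n) ℝ) :=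
  {X | X.PosSemidef ∧ X.trace = 1}

def IsProjOn {n : ℕ} (S : Set (Matrix (Fin n) (Fin n) ℝ))
    (M P : Matrix (Fin n) (Fin n) ℝ) : Prop :=
  P ∈ S ∧ ∀ Z ∈ S, frobNorm (M - P) ≤ frobNorm (M - Z)

def IsEigenDecomp {n : ℕ} (M : Matrix (Fin n) (Fin n) ℝ)
    (lam : Fin n → ℝ) (v : Fin n → Fin n → ℝ) : Prop :=
  Antitone lam ∧
  (∀ i j, (∑ k, v i k * v j k) = if i = j then (1 : ℝ) else 0) ∧
  M = ∑ i, lam i • Matrix.vecMulVec (v i) (v i)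

def IsGradient {n : ℕ} (f : Matrix (Fin n) (Fin n) ℝ → ℝ)
    (g : Matrix (Fin n) (Fin n) ℝ → Matrix (Fin n) (Fin n) ℝ) : Prop :=
  ∀ X H : Matrix (Fin n) (Fin n) ℝ,
    HasDerivAt (fun t : ℝ => f (X + t • H)) (frobInner (g X) H) 0

def IsMinimizerOn {n : ℕ} (f : Matrix (Fin n) (Fin n) ℝ → ℝ)
    (S : Set (Matrix (Fin n) (Fin n) ℝ)) (Xs : Matrix (Fin n) (Fin n) ℝ) : Prop :=
  Xs ∈ S ∧ ∀ Y ∈ S, f Xs ≤ f Y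

/-!
The Rayleigh quotient of a unit eigenvector of `∇̃` differs from that of `∇f(X*)` by at most
`‖∇̃ - ∇f(X)‖ + ‖∇f(X) - ∇f(X*)‖ ≤ ξ + β‖X - X*‖_F`, the spectral norm being bounded by the
Frobenius norm. Summing over the
eigenvectors of the `r + 1` smallest eigenvalues of `∇̃` and applying Ky Fan's inequality to
`∇f(X*)` bounds that sum below by `μ_{n-r} + ⋯ + μ_n - (r + 1)(ξ + β‖X - X*‖_F)`, and
`μ_{n-r} + ⋯ + μ_n ≥ (r + 1)μ_n + δ` since `μ` is non-increasing.
-/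

open Finset Matrix

section Rearrangement

variable {ι : Type*} [Fintype ι] [LinearOrder ι] [LocallyFiniteOrderTop ι]

theorem sum_Ici_le_sum_mul_of_antitone {mu : ι → ℝ} (hmu : Antitone mu) (c : ι) {t : ι → ℝ}
    (ht0 : ∀ j, 0 ≤ t j) (ht1 : ∀ j, t j ≤ 1) (hsum : ∑ j, t j = #(Ici c)) :
    ∑ j ∈ Ici c, mu j ≤ ∑ j, mu j * t j := by
  classical
  -- Each term of `∑ (mu j - mu c) * (t j - [c ≤ j])` is nonnegative, and the sum is the difference.
  have hterm : ∀ j, 0 ≤ (mu j - mu c) * (t j - if c ≤ j then 1 else 0) := by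
    intro j
    by_cases hcj : c ≤ j
    · simp only [hcj, if_true]
      exact mul_nonneg_of_nonpos_of_nonpos (by linarith [hmu hcj]) (by linarith [ht1 j])
    · simp only [hcj, if_false, sub_zero]
      exact mul_nonneg (by linarith [hmu (not_le.mp hcj).le]) (ht0 j)
  have hind : ∀ f : ι → ℝ, ∑ j, f j * (if c ≤ j then 1 else 0) = ∑ j ∈ Ici c, f j := by
    intro f
    simp_rw [mul_ite, mul_one, mul_zero, ← Finset.sum_filter, Finset.filter_le_eq_Ici]
  have hexpand : ∑ j, (mu j - mu c) * (t j - if c ≤ j then 1 else 0)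
      = ∑ j, mu j * t j - ∑ j ∈ Ici c, mu j := by
    simp only [sub_mul, mul_sub, Finset.sum_sub_distrib, ← Finset.mul_sum, hind, hsum,
      Finset.sum_const, nsmul_eq_mul]
    ring
  linarith [Finset.sum_nonneg fun j (_ : j ∈ univ) => hterm j]

omit [Fintype ι] in
theorem card_mul_add_le_sum_Ici_of_antitone {mu : ι → ℝ} (hmu : Antitone mu) (c last : ι)
    (hlast : ∀ j, j ≤ last) :
    #(Ici c) * mu last + (mu c - mu last) ≤ ∑ j ∈ Ici c, mu j := by
  classical
  rw [← Finset.Ioi_insert, Finset.sum_insert Finset.notMem_Ioi_self,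
    Finset.card_insert_of_notMem Finset.notMem_Ioi_self]
  have := Finset.card_nsmul_le_sum (Ioi c) mu (mu last) fun j _ => hmu (hlast j)
  rw [nsmul_eq_mul] at this
  push_cast
  linarith

end Rearrangement

section Orthonormal

variable {ι κ : Type*} [Fintype ι]

theorem dotProduct_mulVec_sum_smul_vecMulVec [Fintype κ] (lam : κ → ℝ) (v : κ → ι → ℝ)
    (u : ι → ℝ) :
    u ⬝ᵥ (∑ k, lam k • vecMulVec (v k) (v k)) *ᵥ u = ∑ k, lam k * (v k ⬝ᵥ u) ^ 2 := by
  simp only [sum_mulVec, smul_mulVec, vecMulVec_mulVec, dotProduct_sum, dotProduct_smul]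
  refine Finset.sum_congr rfl fun k _ => ?_
  simp [dotProduct_comm u (v k), sq]

theorem orthonormal_toLp [DecidableEq κ] {v : κ → ι → ℝ}
    (hv : ∀ i j, v i ⬝ᵥ v j = if i = j then 1 else 0) :
    Orthonormal ℝ fun i => (WithLp.toLp 2 (v i) : EuclideanSpace ℝ ι) := by
  rw [orthonormal_iff_ite]
  intro i j
  simp [EuclideanSpace.inner_eq_star_dotProduct, dotProduct_comm, hv]

theorem sum_sq_dotProduct_le_of_orthonormal [Fintype κ] [DecidableEq κ] {v : κ → ι → ℝ}
    (hv : ∀ i j, v i ⬝ᵥ v j = if i = j then 1 else 0) (u : ι → ℝ) :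
    ∑ i, (v i ⬝ᵥ u) ^ 2 ≤ u ⬝ᵥ u := by
  set x : EuclideanSpace ℝ ι := WithLp.toLp 2 u
  have h := (orthonormal_toLp hv).sum_inner_products_le x (s := univ)
  rw [← real_inner_self_eq_norm_sq, EuclideanSpace.inner_eq_star_dotProduct] at h
  simpa [x, EuclideanSpace.inner_eq_star_dotProduct, dotProduct_comm] using h

theorem sum_sq_dotProduct_eq_of_orthonormal [DecidableEq ι] {w : ι → ι → ℝ}
    (hw : ∀ i j, w i ⬝ᵥ w j = if i = j then 1 else 0) (u : ι → ℝ) :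
    ∑ i, (w i ⬝ᵥ u) ^ 2 = u ⬝ᵥ u := by
  have hW : Matrix.of w * (Matrix.of w)ᵀ = 1 := by
    ext i j
    simpa [Matrix.mul_apply, Matrix.one_apply, dotProduct] using hw i j
  calc ∑ i, (w i ⬝ᵥ u) ^ 2 = (Matrix.of w *ᵥ u) ⬝ᵥ (Matrix.of w *ᵥ u) := by
        simp [dotProduct, mulVec, sq]
    _ = ((Matrix.of w)ᵀ * Matrix.of w) *ᵥ u ⬝ᵥ u := by
        rw [dotProduct_mulVec, ← mulVec_transpose, mulVec_mulVec]
    _ = u ⬝ᵥ u := by rw [mul_eq_one_comm.mp hW, one_mulVec]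

end Orthonormal

section OperatorNorms

variable {n : ℕ}

theorem sqrt_sum_sq_mulVec_le_frobNorm (A : Matrix (Fin n) (Fin n) ℝ) {u : Fin n → ℝ}
    (hu : ∑ k, u k ^ 2 = 1) : √(∑ i, (A *ᵥ u) i ^ 2) ≤ frobNorm A := by
  refine Real.sqrt_le_sqrt (Finset.sum_le_sum fun i _ => ?_)
  simpa [mulVec, dotProduct, hu] using Finset.sum_mul_sq_le_sq_mul_sq univ (A i) u

theorem specNorm_le_frobNorm (A : Matrix (Fin n) (Fin n) ℝ) : specNorm A ≤ frobNorm A :=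
  Real.sSup_le (by rintro _ ⟨u, hu, rfl⟩; exact sqrt_sum_sq_mulVec_le_frobNorm A hu)
    (Real.sqrt_nonneg _)

theorem abs_dotProduct_mulVec_le_specNorm (A : Matrix (Fin n) (Fin n) ℝ) {u : Fin n → ℝ}
    (hu : u ⬝ᵥ u = 1) : |u ⬝ᵥ A *ᵥ u| ≤ specNorm A := by
  have hu' : ∑ k, u k ^ 2 = 1 := by simpa [dotProduct, sq] using hu
  have hbdd : BddAbove {s : ℝ | ∃ v : Fin n → ℝ, (∑ k, v k ^ 2) = 1 ∧
      s = √(∑ i, (A *ᵥ v) i ^ 2)} :=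
    ⟨frobNorm A, by rintro _ ⟨v, hv, rfl⟩; exact sqrt_sum_sq_mulVec_le_frobNorm A hv⟩
  refine le_trans (Real.abs_le_sqrt ?_) (le_csSup hbdd ⟨u, hu', rfl⟩)
  simpa [dotProduct, hu'] using Finset.sum_mul_sq_le_sq_mul_sq univ u (A *ᵥ u)

theorem dotProduct_mulVec_sub_specNorm_le (A B : Matrix (Fin n) (Fin n) ℝ) {u : Fin n → ℝ}
    (hu : u ⬝ᵥ u = 1) : u ⬝ᵥ A *ᵥ u - specNorm (B - A) ≤ u ⬝ᵥ B *ᵥ u := by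
  have h := abs_le.mp (abs_dotProduct_mulVec_le_specNorm (B - A) hu)
  rw [sub_mulVec, dotProduct_sub] at h
  linarith [h.1]

end OperatorNorms

namespace IsEigenDecomp

variable {n : ℕ} {M : Matrix (Fin n) (Fin n) ℝ} {lam : Fin n → ℝ} {v : Fin n → Fin n → ℝ}

theorem antitone (h : IsEigenDecomp M lam v) : Antitone lam :=
  h.1

theorem orthonormal (h : IsEigenDecomp M lam v) (i j : Fin n) :
    v i ⬝ᵥ v j = if i = j then 1 else 0 :=
  h.2.1 i j

theorem dotProduct_mulVec_eq (h : IsEigenDecomp M lam v) (u : Fin n → ℝ) :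
    u ⬝ᵥ M *ᵥ u = ∑ k, lam k * (v k ⬝ᵥ u) ^ 2 := by
  rw [h.2.2]
  exact dotProduct_mulVec_sum_smul_vecMulVec lam v u

theorem dotProduct_mulVec_self (h : IsEigenDecomp M lam v) (a : Fin n) :
    v a ⬝ᵥ M *ᵥ v a = lam a := by
  simp [h.dotProduct_mulVec_eq, h.orthonormal]

/-- Ky Fan's inequality. The weights `∑ i, (v p ⬝ᵥ u i) ^ 2` lie in `[0, 1]` by Bessel's
inequality and add up to `#(Ici c)` by Parseval's identity. -/
theorem sum_Ici_le_sum_dotProduct_mulVec (h : IsEigenDecomp M lam v) (c : Fin n)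
    {κ : Type*} [Fintype κ] [DecidableEq κ] {u : κ → Fin n → ℝ}
    (hu : ∀ i j, u i ⬝ᵥ u j = if i = j then 1 else 0) (hcard : Fintype.card κ = #(Ici c)) :
    ∑ j ∈ Ici c, lam j ≤ ∑ i, u i ⬝ᵥ M *ᵥ u i := by
  have hle : ∀ p, ∑ i, (v p ⬝ᵥ u i) ^ 2 ≤ 1 := fun p => by
    simpa [dotProduct_comm (v p), h.orthonormal] using sum_sq_dotProduct_le_of_orthonormal hu (v p)
  have hsum : ∑ p, ∑ i, (v p ⬝ᵥ u i) ^ 2 = #(Ici c) := by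
    simp [Finset.sum_comm (γ := Fin n), sum_sq_dotProduct_eq_of_orthonormal h.orthonormal, hu,
      ← hcard]
  calc ∑ j ∈ Ici c, lam j ≤ ∑ p, lam p * ∑ i, (v p ⬝ᵥ u i) ^ 2 :=
        sum_Ici_le_sum_mul_of_antitone h.antitone c (fun p => by positivity) hle hsum
    _ = ∑ i, u i ⬝ᵥ M *ᵥ u i := by
        simp only [Finset.mul_sum, h.dotProduct_mulVec_eq]
        exact Finset.sum_comm

end IsEigenDecomp

/-- upper bound on minus the sum of the r+1 smallest eigenvalues of ∇̃. -/
theorem stmt13 (n r : ℕ) (hrn : r < n)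
    (β ξ : ℝ)
    (g : Matrix (Fin n) (Fin n) ℝ → Matrix (Fin n) (Fin n) ℝ)
    (hsmooth : ∀ X Y, frobNorm (g X - g Y) ≤ β * frobNorm (X - Y))
    (Xstar : Matrix (Fin n) (Fin n) ℝ)
    (mu : Fin n → ℝ) (w : Fin n → Fin n → ℝ)
    (hmu : IsEigenDecomp (g Xstar) mu w)
    (δ : ℝ) (hδ : δ = mu ⟨n - r - 1, by omega⟩ - mu ⟨n - 1, by omega⟩)
    (X : Matrix (Fin n) (Fin n) ℝ)
    (D : Matrix (Fin n) (Fin n) ℝ)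
    (lamD : Fin n → ℝ) (wD : Fin n → Fin n → ℝ)
    (hlamD : IsEigenDecomp D lamD wD)
    (hDerr : specNorm (D - g X) ≤ ξ) :
    -(∑ i : Fin (r + 1), lamD ⟨n - 1 - (i : ℕ), by have := i.2; omega⟩) ≤
      -(((r : ℝ) + 1) * mu ⟨n - 1, by omega⟩ + δ) +
        ((r : ℝ) + 1) * (ξ + β * frobNorm (X - Xstar)) := by
  set c : Fin n := ⟨n - r - 1, by omega⟩
  set idx : Fin (r + 1) → Fin n := fun i => ⟨n - 1 - i, by omega⟩
  have hidx : Function.Injective idx := fun i j hij => by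
    have := congrArg Fin.val hij
    simp only [idx] at this
    exact Fin.ext (by omega)
  have hcard : #(Ici c) = r + 1 := by simp only [c, Fin.card_Ici]; omega
  have hperturb : ∀ i, wD (idx i) ⬝ᵥ g Xstar *ᵥ wD (idx i) - (ξ + β * frobNorm (X - Xstar))
      ≤ lamD (idx i) := fun i => by
    have hu : wD (idx i) ⬝ᵥ wD (idx i) = 1 := by simp [hlamD.orthonormal]
    rw [← hlamD.dotProduct_mulVec_self]
    linarith [dotProduct_mulVec_sub_specNorm_le (g X) D hu,
      dotProduct_mulVec_sub_specNorm_le (g Xstar) (g X) hu,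
      specNorm_le_frobNorm (g X - g Xstar), hsmooth X Xstar]
  have hkyfan := hmu.sum_Ici_le_sum_dotProduct_mulVec c (u := wD ∘ idx)
    (fun i j => by simpa [hidx.eq_iff] using hlamD.orthonormal (idx i) (idx j)) (by simp [hcard])
  have htail := card_mul_add_le_sum_Ici_of_antitone hmu.antitone c ⟨n - 1, by omega⟩
    (fun j => Fin.mk_le_mk.mpr (by omega))
  have hsum := Finset.sum_le_sum fun i (_ : i ∈ univ) => hperturb i
  rw [hcard] at htail
  simp only [Finset.sum_sub_distrib, Finset.sum_const, card_univ, Fintype.card_fin,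
    nsmul_eq_mul] at hsum
  push_cast at htail hsum
  simp only [Function.comp_apply] at hkyfan
  linarith

end LRSGD
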